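/- Let k ≥ 1, ε ∈ (0, 1], δ ≥ 0, γ ≥ 0, calibration conformity scores A : {1, …, k} → ℝ, estimated probabilities p : {1, …, k} → ℝ, update values u(i) = +1 if p(i) < (1 − ε) − δ, u(i) = −1 if p(i) > (1 − ε) + δ, u(i) = 0 otherwise; define A_γ(i) = A(i) + γ·u(i), let t(γ) be the minimum of A_γ(i) over all i satisfying #{ j : A_γ(i) ≥ A_γ(j) } + 1 ≥ ε(k + 1), and let c_i(γ) = 1 if A_γ(i) ≥ t(γ) and 0 otherwise. Let X be the object space with objects x_1, …, x_k, let B be a parameter space, and let p̃ : B → X → ℝ be a parametric binary probability model with 0 < p̃(β, x) < 1 for all β, x; for c ∈ {0, 1} write P(C = c | x; β) = p̃(β, x) if c = 1 and 1 − p̃(β, x) if c = 0, with binomial log-likelihood L(E; β) = Σ_{(x,c) ∈ E} log P(C = c | x; β) and sample mean of conditional log-odds μ(E; β) = (1/|E|) Σ_{(x,c) ∈ E} log( P(C = c | x; β) / (1 − P(C = c | x; β)) ). Let D_γ = {(x_i, c_i(γ)) : i ∈ {1, …, k}} and suppose β̂(0) maximizes β ↦ L(D_0; β) and β̂(γ)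 maximizes β ↦ L(D_γ; β). If the set S_γ = {(x_i, c_i(γ)) : i ∈ {1, …, k} and c_i(0) ≠ c_i(γ)} is nonempty, then μ(S_γ; β̂(γ)) ≥ μ(S_γ; β̂(0)). -/
import Mathlib


/-- The update values `U*`: `+1` if the estimated conditional probability is below
`(1-ε) - δ`, `-1` if it is above `(1-ε) + δ`, and `0` otherwise. -/
noncomputable def updateVal {k : ℕ} (ε δ : ℝ) (p : Fin k → ℝ) (i : Fin k) : ℝ :=
  if p i < (1 - ε) - δ then 1 else if p i > (1 - ε) + δ then -1 else 0

/-- The empirical `ε`-quantile threshold: the minimum of `B i` over indices `i` whose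
score rank satisfies `#{j : B j ≤ B i} + 1 ≥ ε (k + 1)`.  Since the set of such scores is
finite and (for `ε ≤ 1`) nonempty, its infimum is its minimum. -/
noncomputable def threshold {k : ℕ} (ε : ℝ) (B : Fin k → ℝ) : ℝ :=
  sInf {t : ℝ | ∃ i : Fin k,
    (((Finset.univ.filter (fun j : Fin k => B j ≤ B i)).card : ℝ) + 1 ≥ ε * (k + 1)) ∧
    B i = t}

/-- The correctness indicator `c_i(γ)` as a Boolean label: `true` iff the adjusted score
`A_γ i = A i + γ * u i` is at least the threshold `t(γ)`. -/
noncomputable def correct {k : ℕ} (ε : ℝ) (A u : Fin k → ℝ) (γ : ℝ) (i : Fin k) : Bool :=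
  decide (A i + γ * u i ≥ threshold ε (fun j => A j + γ * u j))

/-- `P(C = c | x; β)` for a parametric binary probability model `p`. -/
noncomputable def condProb {B X : Type*} (p : B → X → ℝ) (β : B) (x : X) (c : Bool) : ℝ :=
  if c then p β x else 1 - p β x

/-- Binomial log-likelihood of the family of observations `(x i, c i)` for `i ∈ S`. -/
noncomputable def logLik {B X : Type*} {n : ℕ} (p : B → X → ℝ)
    (x : Fin n → X) (c : Fin n → Bool) (S : Finset (Fin n)) (β : B) : ℝ :=
  ∑ i ∈ S, Real.log (condProb p β (x i) (c i))

/-- Sample mean of conditional log-odds of the observations `(x i, c i)` for `i ∈ S`. -/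
noncomputable def meanLogOdds {B X : Type*} {n : ℕ} (p : B → X → ℝ)
    (x : Fin n → X) (c : Fin n → Bool) (S : Finset (Fin n)) (β : B) : ℝ :=
  (1 / (S.card : ℝ)) *
    ∑ i ∈ S, Real.log (condProb p β (x i) (c i) / (1 - condProb p β (x i) (c i)))

/-- Theorem 2: let `c_i(γ)` be the correctness labels of the ICP with the feedback-adjusted
conformity scores `A_γ i = A i + γ * U*(i)`, let `β₀` maximize the log-likelihood of
`D₀ = (x i, c_i(0))_{i<k}` and `βγ` maximize the log-likelihood of `Dγ = (x i, c_i(γ))_{i<k}`.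
If the set `S_γ` of observations `(x i, c_i(γ))` with switched outcome `c_i(0) ≠ c_i(γ)` is
nonempty, then `μ(S_γ; βγ) ≥ μ(S_γ; β₀)`. -/
theorem stmt_5 {B X : Type*} {k : ℕ} (hk : 1 ≤ k)
    (ε : ℝ) (hε : 0 < ε) (hε1 : ε ≤ 1) (δ : ℝ) (hδ : 0 ≤ δ) (γ : ℝ) (hγ : 0 ≤ γ)
    (A p : Fin k → ℝ) (x : Fin k → X)
    (ptilde : B → X → ℝ) (hp : ∀ β x', 0 < ptilde β x' ∧ ptilde β x' < 1)
    (β₀ βγ : B)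
    (h₀ : ∀ β, logLik ptilde x (correct ε A (updateVal ε δ p) 0) Finset.univ β ≤
               logLik ptilde x (correct ε A (updateVal ε δ p) 0) Finset.univ β₀)
    (hγ' : ∀ β, logLik ptilde x (correct ε A (updateVal ε δ p) γ) Finset.univ β ≤
                logLik ptilde x (correct ε A (updateVal ε δ p) γ) Finset.univ βγ)
    (Sγ : Finset (Fin k))
    (hSγ : Sγ = Finset.univ.filter (fun i =>
      correct ε A (updateVal ε δ p) 0 i ≠ correct ε A (updateVal ε δ p) γ i))
    (hne : Sγ.Nonempty) :
    meanLogOdds ptilde x (correct ε A (updateVal ε δ p) γ) Sγ β₀ ≤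
      meanLogOdds ptilde x (correct ε A (updateVal ε δ p) γ) Sγ βγ := by
  set c0 := correct ε A (updateVal ε δ p) 0 with hc0
  set cγ := correct ε A (updateVal ε δ p) γ with hcγ
  -- basic positivity facts
  have hpos : ∀ (β : B) (i : Fin k) (c : Bool),
      0 < condProb ptilde β (x i) c ∧ condProb ptilde β (x i) c < 1 := by
    intro β i c
    rcases hp β (x i) with ⟨h1, h2⟩
    cases c <;> simp [condProb] <;> constructor <;> linarith
  -- On Sγ, c0 i = ¬ cγ i
  have hflip : ∀ i ∈ Sγ, c0 i = ! cγ i := by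
    intro i hi
    rw [hSγ, Finset.mem_filter] at hi
    rcases hi with ⟨-, hne'⟩
    cases h0 : c0 i <;> cases hg : cγ i <;> simp_all
  have hswap : ∀ (β : B) (i : Fin k), i ∈ Sγ →
      condProb ptilde β (x i) (c0 i) = 1 - condProb ptilde β (x i) (cγ i) := by
    intro β i hi
    rw [hflip i hi]
    cases cγ i <;> simp [condProb]
  -- split log-likelihood over Sγ and its complement
  have hsplit : ∀ (β : B) (c : Fin k → Bool),
      logLik ptilde x c Finset.univ β =
        (∑ i ∈ Sγ, Real.log (condProb ptilde β (x i) (c i))) +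
        (∑ i ∈ Sγᶜ, Real.log (condProb ptilde β (x i) (c i))) := by
    intro β c
    rw [logLik, ← Finset.sum_add_sum_compl Sγ]
  -- equal labels outside Sγ
  have hsame : ∀ i ∈ Sγᶜ, c0 i = cγ i := by
    intro i hi
    rw [Finset.mem_compl, hSγ, Finset.mem_filter] at hi
    push_neg at hi
    exact hi (Finset.mem_univ i)
  have hcompl : ∀ β : B,
      (∑ i ∈ Sγᶜ, Real.log (condProb ptilde β (x i) (c0 i))) =
      (∑ i ∈ Sγᶜ, Real.log (condProb ptilde β (x i) (cγ i))) := by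
    intro β
    exact Finset.sum_congr rfl fun i hi => by rw [hsame i hi]
  have H1 := h₀ βγ
  have H2 := hγ' β₀
  rw [hsplit, hsplit] at H1 H2
  rw [hcompl βγ, hcompl β₀] at H1
  -- key inequality on sums over Sγ
  have key : (∑ i ∈ Sγ, (Real.log (condProb ptilde β₀ (x i) (cγ i)) -
        Real.log (1 - condProb ptilde β₀ (x i) (cγ i)))) ≤
      (∑ i ∈ Sγ, (Real.log (condProb ptilde βγ (x i) (cγ i)) -
        Real.log (1 - condProb ptilde βγ (x i) (cγ i)))) := by
    have e1 : ∀ β : B, (∑ i ∈ Sγ, Real.log (condProb ptilde β (x i) (c0 i))) =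
        (∑ i ∈ Sγ, Real.log (1 - condProb ptilde β (x i) (cγ i))) :=
      fun β => Finset.sum_congr rfl fun i hi => by rw [hswap β i hi]
    rw [e1, e1] at H1
    rw [Finset.sum_sub_distrib, Finset.sum_sub_distrib]
    linarith
  -- transfer to log of quotient
  have hquot : ∀ (β : B), (∑ i ∈ Sγ, Real.log (condProb ptilde β (x i) (cγ i) /
        (1 - condProb ptilde β (x i) (cγ i)))) =
      (∑ i ∈ Sγ, (Real.log (condProb ptilde β (x i) (cγ i)) -
        Real.log (1 - condProb ptilde β (x i) (cγ i)))) := by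
    intro β
    refine Finset.sum_congr rfl fun i hi => ?_
    rcases hpos β i (cγ i) with ⟨h1, h2⟩
    rw [Real.log_div (ne_of_gt h1) (by linarith)]
  rw [meanLogOdds, meanLogOdds, hquot, hquot]
  have hcard : (0:ℝ) < Sγ.card := by exact_mod_cast Finset.card_pos.mpr hne
  have : (0:ℝ) ≤ 1 / (Sγ.card : ℝ) := by positivity
  nlinarith [key]
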